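/- Let k ∈ ℤ∖{0} and write π = π_k^{0,0}. For a smooth function f : ℝ² → ℂ define the derived operators pointwise by (D₁f)(x,t) = d/ds|_{s=0} (π((s,0,0,0,0))f)(x,t), (D₂f)(x,t) = d/ds|_{s=0} (π((0,s,0,0,0))f)(x,t), (D₃f)(x,t) = d/ds|_{s=0} (π((0,0,s,0,0))f)(x,t), (D_Tf)(x,t) = d/ds|_{s=0} (π((0,0,0,s,0))f)(x,t). Then D₁f = ∂f/∂x, (D₂f)(x,t) = −4πik(t−x²/2)f(x,t), (D₃f)(x,t) = 4πikx·f(x,t), D_Tf = ∂f/∂t, and consequently −(D₁(D₁f) + D₂(D₂f) + D₃(D₃f) + D_T(D_Tf)) = Δ_k f for every smooth f. -/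
import Mathlib


noncomputable section

/-- The underlying set `ℝ⁵` of the group `G̃`. -/
abbrev G5 : Type := ℝ × ℝ × ℝ × ℝ × ℝ

/-- The representation `π_k^{m,n}` of `G̃` on functions on `ℝ²`. -/
def pirep (k m n : ℤ) (g : G5) (f : ℝ × ℝ → ℂ) : ℝ × ℝ → ℂ := fun p =>
  Complex.exp (Complex.I *
      ((-4) * Real.pi * (k : ℝ) *
        (g.2.2.2.2 + g.2.1 * p.2 - g.2.2.1 * (p.1 + g.1) - g.1 * g.2.1 * p.1 -
          (g.2.1 / 2) * (p.1 ^ 2 + g.1 ^ 2)) : ℝ)) *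
    Complex.exp (Complex.I *
      ((-2) * Real.pi *
        ((m : ℝ) * g.2.1 - (n : ℝ) * (g.2.2.1 + g.2.1 * (p.1 + g.1))) : ℝ)) *
    f (p.1 + g.1, p.2 + g.2.2.2.1)

/-- `(D₁f)(x,t) = d/ds|₀ (π((s,0,0,0,0))f)(x,t)`. -/
def D1 (k : ℤ) (f : ℝ × ℝ → ℂ) : ℝ × ℝ → ℂ := fun p =>
  deriv (fun s : ℝ => pirep k 0 0 (s, (0 : ℝ), (0 : ℝ), (0 : ℝ), (0 : ℝ)) f p) 0

/-- `(D₂f)(x,t) = d/ds|₀ (π((0,s,0,0,0))f)(x,t)`. -/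
def D2 (k : ℤ) (f : ℝ × ℝ → ℂ) : ℝ × ℝ → ℂ := fun p =>
  deriv (fun s : ℝ => pirep k 0 0 ((0 : ℝ), s, (0 : ℝ), (0 : ℝ), (0 : ℝ)) f p) 0

/-- `(D₃f)(x,t) = d/ds|₀ (π((0,0,s,0,0))f)(x,t)`. -/
def D3 (k : ℤ) (f : ℝ × ℝ → ℂ) : ℝ × ℝ → ℂ := fun p =>
  deriv (fun s : ℝ => pirep k 0 0 ((0 : ℝ), (0 : ℝ), s, (0 : ℝ), (0 : ℝ)) f p) 0

/-- `(D_Tf)(x,t) = d/ds|₀ (π((0,0,0,s,0))f)(x,t)`. -/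
def DT (k : ℤ) (f : ℝ × ℝ → ℂ) : ℝ × ℝ → ℂ := fun p =>
  deriv (fun s : ℝ => pirep k 0 0 ((0 : ℝ), (0 : ℝ), (0 : ℝ), s, (0 : ℝ)) f p) 0

/-- Partial derivative in the first variable. -/
def pdx (f : ℝ × ℝ → ℂ) : ℝ × ℝ → ℂ := fun p => deriv (fun x : ℝ => f (x, p.2)) p.1

/-- Partial derivative in the second variable. -/
def pdt (f : ℝ × ℝ → ℂ) : ℝ × ℝ → ℂ := fun p => deriv (fun t : ℝ => f (p.1, t)) p.2

/-- The filtered Laplacian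
`(Δ_k f)(x,t) = −∂²f/∂x² − ∂²f/∂t² + 16k²π²((x²+t²)+x²(x²/4−t))·f(x,t)`. -/
def Δk (k : ℤ) (f : ℝ × ℝ → ℂ) : ℝ × ℝ → ℂ := fun p =>
  -pdx (pdx f) p - pdt (pdt f) p +
    ((16 * (k : ℝ) ^ 2 * Real.pi ^ 2 *
        ((p.1 ^ 2 + p.2 ^ 2) + p.1 ^ 2 * (p.1 ^ 2 / 4 - p.2)) : ℝ) : ℂ) * f p


private lemma d1_eq (k : ℤ) (g : ℝ × ℝ → ℂ) (p : ℝ × ℝ) : D1 k g p = pdx g p := by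
  unfold D1 pirep pdx
  simp only [mul_zero, zero_mul, add_zero, sub_zero, zero_add, zero_div,
    Complex.ofReal_zero, Complex.exp_zero, mul_one, one_mul, Int.cast_zero]
  rw [deriv_comp_const_add (fun x : ℝ => g (x, p.2)) p.1 0]
  simp

private lemma dT_eq (k : ℤ) (g : ℝ × ℝ → ℂ) (p : ℝ × ℝ) : DT k g p = pdt g p := by
  unfold DT pirep pdt
  simp only [mul_zero, zero_mul, add_zero, sub_zero, zero_add, zero_div,
    Complex.ofReal_zero, Complex.exp_zero, mul_one, one_mul, Int.cast_zero]
  rw [deriv_comp_const_add (fun t : ℝ => g (p.1, t)) p.2 0]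
  simp

private lemma deriv_aux (c : ℝ) (w : ℂ) :
    deriv (fun s : ℝ => Complex.exp (Complex.I * ((c * s : ℝ) : ℂ)) * w) 0
      = Complex.I * (c : ℂ) * w := by
  have h0 : HasDerivAt (fun s : ℝ => c * s) (c * 1) 0 := (hasDerivAt_id (0 : ℝ)).const_mul _
  have h4 := ((h0.ofReal_comp.const_mul Complex.I).cexp).mul_const w
  rw [h4.deriv]
  push_cast
  ring_nf
  simp [Complex.exp_zero]

private lemma d2_eq (k : ℤ) (g : ℝ × ℝ → ℂ) (p : ℝ × ℝ) :
    D2 k g p = Complex.I * (((-4) * Real.pi * (k : ℝ) * (p.2 - p.1 ^ 2 / 2) : ℝ) : ℂ) * g p := by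
  have key : (fun s : ℝ => pirep k 0 0 ((0 : ℝ), s, (0 : ℝ), (0 : ℝ), (0 : ℝ)) g p)
      = fun s : ℝ => Complex.exp (Complex.I *
          ((((-4) * Real.pi * (k : ℝ) * (p.2 - p.1 ^ 2 / 2)) * s : ℝ) : ℂ)) * g p := by
    funext s
    unfold pirep
    simp only [mul_zero, zero_mul, add_zero, sub_zero, zero_add, zero_div,
      Complex.ofReal_zero, Complex.exp_zero, mul_one, one_mul, Int.cast_zero]
    congr 2
    push_cast
    ring
  unfold D2
  rw [key, deriv_aux]

private lemma d3_eq (k : ℤ) (g : ℝ × ℝ → ℂ) (p : ℝ × ℝ) :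
    D3 k g p = Complex.I * ((4 * Real.pi * (k : ℝ) * p.1 : ℝ) : ℂ) * g p := by
  have key : (fun s : ℝ => pirep k 0 0 ((0 : ℝ), (0 : ℝ), s, (0 : ℝ), (0 : ℝ)) g p)
      = fun s : ℝ => Complex.exp (Complex.I *
          (((4 * Real.pi * (k : ℝ) * p.1) * s : ℝ) : ℂ)) * g p := by
    funext s
    unfold pirep
    simp only [mul_zero, zero_mul, add_zero, sub_zero, zero_add, zero_div,
      Complex.ofReal_zero, Complex.exp_zero, mul_one, one_mul, Int.cast_zero]
    congr 2
    push_cast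
    ring
  unfold D3
  rw [key, deriv_aux]

/-- The derived representation of `π_k^{0,0}`: explicit formulas for
`D₁, D₂, D₃, D_T`, and `−(D₁² + D₂² + D₃² + D_T²) = Δ_k` on smooth functions. -/
theorem stmt17 (k : ℤ) (hk : k ≠ 0) (f : ℝ × ℝ → ℂ) (hf : ContDiff ℝ (⊤ : ℕ∞) f) :
    (∀ p : ℝ × ℝ, D1 k f p = pdx f p) ∧
    (∀ p : ℝ × ℝ, D2 k f p =
      Complex.I * (((-4) * Real.pi * (k : ℝ) * (p.2 - p.1 ^ 2 / 2) : ℝ) : ℂ) * f p) ∧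
    (∀ p : ℝ × ℝ, D3 k f p =
      Complex.I * ((4 * Real.pi * (k : ℝ) * p.1 : ℝ) : ℂ) * f p) ∧
    (∀ p : ℝ × ℝ, DT k f p = pdt f p) ∧
    (∀ p : ℝ × ℝ,
      -(D1 k (D1 k f) p + D2 k (D2 k f) p + D3 k (D3 k f) p + DT k (DT k f) p) =
        Δk k f p) := by
  have hD1 : D1 k f = pdx f := funext (d1_eq k f)
  have hDT : DT k f = pdt f := funext (dT_eq k f)
  refine ⟨d1_eq k f, d2_eq k f, d3_eq k f, dT_eq k f, fun p => ?_⟩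
  rw [hD1, d1_eq, hDT, dT_eq, d2_eq, d2_eq, d3_eq, d3_eq, Δk]
  push_cast
  ring_nf
  simp only [Complex.I_sq]
  ring


end
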